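/- arXiv:2402.00855 — 6 statements merged into one kernel-verified Lean document; each statement's English description precedes it below -/
import Mathlib

section
/- For every participant i = 1, …, n and every outcome ω, the payout satisfies W_i(ω) ≥ S(0) · (1+R) · f_i · I_i(ω), where S(0) = (Σ_{j=1}^{n+1} π_j) / (Σ_{j=1}^{n} f_j) is the time-0 value of a tontine share; that is, a surviving participant always receives at least the accumulated time-1 value of his allocated tontine shares. -/
open MeasureTheory Finset

/-!
A surviving participant `i` makes the administrator's indicator `∏ j, (1 - I j)` vanish, so the
payout divides the accumulated pot by `∑ j, f j * I j`, the shares of the survivors. This total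
lies between `f i > 0` and `∑ j, f j`, and dividing by fewer shares pays more per share.
-/

theorem tontine_share_value_le_payout {ι : Type*} [Fintype ι] {f I : ι → ℝ}
    (hf : ∀ j, 0 < f j) (hI : ∀ j, I j = 0 ∨ I j = 1) {c : ℝ} (hc : 0 ≤ c) (a : ℝ) (i : ι) :
    c / (∑ j, f j) * (f i * I i) ≤ c * (f i * I i) / (∑ j, f j * I j + a * ∏ j, (1 - I j)) := by
  rcases hI i with hi | hi
  · simp [hi]
  have hI_nonneg : ∀ j, 0 ≤ I j := fun j => by rcases hI j with h | h <;> simp [h]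
  have hI_le_one : ∀ j, I j ≤ 1 := fun j => by rcases hI j with h | h <;> simp [h]
  have hprod : ∏ j, (1 - I j) = 0 := prod_eq_zero (mem_univ i) (by rw [hi, sub_self])
  have hfi_le : f i ≤ ∑ j, f j * I j := by
    simpa [hi] using single_le_sum (f := fun j => f j * I j)
      (fun j _ => mul_nonneg (hf j).le (hI_nonneg j)) (mem_univ i)
  have hsum_le : ∑ j, f j * I j ≤ ∑ j, f j :=
    sum_le_sum fun j _ => mul_le_of_le_one_right (hf j).le (hI_le_one j)
  rw [hprod, mul_zero, add_zero, hi, mul_one, div_mul_eq_mul_div]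
  exact div_le_div_of_nonneg_left (mul_nonneg hc (hf i).le) ((hf i).trans_le hfi_le) hsum_le

theorem tontine_payout_ge_share_value_general
    {Ω : Type*}
    (n : ℕ)
    (I : Fin n → Ω → ℝ) (hI01 : ∀ j ω, I j ω = 0 ∨ I j ω = 1)
    (Iadm : Ω → ℝ) (hIadm : ∀ ω, Iadm ω = ∏ j, (1 - I j ω))
    (π : Fin n → ℝ) (hπ : ∀ j, 0 < π j) (πadm : ℝ) (hπadm : 0 ≤ πadm)
    (f : Fin n → ℝ) (hf : ∀ j, 0 < f j) (fadm : ℝ)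
    (R : ℝ) (hR : 0 ≤ R)
    (W : Fin n → Ω → ℝ)
    (hW : ∀ i ω, W i ω =
      (1 + R) * ((∑ j, π j) + πadm) * (f i * I i ω) /
        ((∑ j, f j * I j ω) + fadm * Iadm ω))
    (S0 : ℝ) (hS0 : S0 = ((∑ j, π j) + πadm) / (∑ j, f j)) :
    ∀ (i : Fin n) (ω : Ω), W i ω ≥ S0 * (1 + R) * f i * I i ω := by
  intro i ω
  have hpot : 0 ≤ (1 + R) * ((∑ j, π j) + πadm) :=
    mul_nonneg (by linarith) (add_nonneg (sum_nonneg fun j _ => (hπ j).le) hπadm)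
  have key := tontine_share_value_le_payout hf (hI01 · ω) hpot fadm i
  rw [ge_iff_le, hW, hIadm, hS0]
  convert key using 1
  ring

/-- Every participant's payout is at least the accumulated time-1 value of his allocated
tontine shares: `W_i(ω) ≥ S(0) · (1+R) · f_i · I_i(ω)`,
where `S(0) = (Σ_{j=1}^{n+1} π_j) / (Σ_{j=1}^{n} f_j)`. -/
theorem tontine_payout_ge_share_value
    {Ω : Type*} [MeasurableSpace Ω] (P : Measure Ω) [IsProbabilityMeasure P]
    (n : ℕ) (hn : 1 ≤ n)
    (I : Fin n → Ω → ℝ) (hI01 : ∀ j ω, I j ω = 0 ∨ I j ω = 1)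
    (hImeas : ∀ j, Measurable (I j))
    (Iadm : Ω → ℝ) (hIadm : ∀ ω, Iadm ω = ∏ j, (1 - I j ω))
    (hadm0 : 0 < P {ω | Iadm ω = 1}) (hadm1 : P {ω | Iadm ω = 1} < 1)
    (π : Fin n → ℝ) (hπ : ∀ j, 0 < π j) (πadm : ℝ) (hπadm : 0 ≤ πadm)
    (f : Fin n → ℝ) (hf : ∀ j, 0 < f j) (fadm : ℝ) (hfadm : 0 < fadm)
    (R : ℝ) (hR : 0 ≤ R)
    (W : Fin n → Ω → ℝ)
    (hW : ∀ i ω, W i ω =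
      (1 + R) * ((∑ j, π j) + πadm) * (f i * I i ω) /
        ((∑ j, f j * I j ω) + fadm * Iadm ω))
    (S0 : ℝ) (hS0 : S0 = ((∑ j, π j) + πadm) / (∑ j, f j)) :
    ∀ (i : Fin n) (ω : Ω), W i ω ≥ S0 * (1 + R) * f i * I i ω :=
  tontine_payout_ge_share_value_general n I hI01 Iadm hIadm π hπ πadm hπadm f hf fadm R hR W hW S0
    hS0
end

section
/- Under the T allocation scheme, in which each participant's share equals his investment (f_i = π_i for i = 1, …, n), every participant's payout satisfies W_i(ω) ≥ π_i · (1+R) · I_i(ω) for all outcomes ω; i.e. upon survival each participant receives at least the accumulated value of his initial investment. -/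
open MeasureTheory Finset

/-!
On a death (`I i = 0`) both sides vanish. On survival the administrator's indicator is `0`,
so under `f = π` the payout is `(1+R) S π_i / D` with `S` the total investment and
`D = ∑ π_j I_j` the invested capital of the survivors; since `π_i ≤ D ≤ S`, the factor
`S / D` is at least `1`.
-/

section WeightedIndicators

variable {ι R : Type*} [Fintype ι]

theorem sum_mul_le_sum_of_le_one [Semiring R] [PartialOrder R] [IsOrderedRing R]
    {w x : ι → R} (hw : ∀ j, 0 ≤ w j) (hx : ∀ j, x j ≤ 1) :
    ∑ j, w j * x j ≤ ∑ j, w j :=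
  sum_le_sum fun j _ => mul_le_of_le_one_right (hw j) (hx j)

theorem le_sum_mul_of_eq_one [Semiring R] [PartialOrder R] [IsOrderedRing R]
    {w x : ι → R} (hw : ∀ j, 0 ≤ w j) (hx : ∀ j, 0 ≤ x j) {i : ι} (hi : x i = 1) :
    w i ≤ ∑ j, w j * x j := by
  simpa [hi] using
    single_le_sum (f := fun j => w j * x j) (fun j _ => mul_nonneg (hw j) (hx j)) (mem_univ i)

end WeightedIndicators

theorem le_mul_div_of_le {c D S : ℝ} (hc : 0 ≤ c) (hD : 0 < D) (hDS : D ≤ S) :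
    c ≤ S * c / D := by
  rw [le_div_iff₀ hD, mul_comm S]
  exact mul_le_mul_of_nonneg_left hDS hc

theorem le_proportional_share {ι : Type*} [Fintype ι] {π x : ι → ℝ} (hπ : ∀ j, 0 < π j)
    (hx : ∀ j, x j = 0 ∨ x j = 1) {S : ℝ} (hS : ∑ j, π j ≤ S) {i : ι} (hi : x i = 1) :
    π i ≤ S * π i / ∑ j, π j * x j := by
  have hπ0 : ∀ j, 0 ≤ π j := fun j => (hπ j).le
  have hx0 : ∀ j, 0 ≤ x j := fun j => by rcases hx j with h | h <;> simp [h]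
  have hx1 : ∀ j, x j ≤ 1 := fun j => by rcases hx j with h | h <;> simp [h]
  have hlo : π i ≤ ∑ j, π j * x j := le_sum_mul_of_eq_one hπ0 hx0 hi
  exact le_mul_div_of_le (hπ0 i) ((hπ i).trans_le hlo)
    ((sum_mul_le_sum_of_le_one hπ0 hx1).trans hS)

theorem tontine_T_scheme_payout_ge_investment_general
    {Ω : Type*}
    (n : ℕ)
    (I : Fin n → Ω → ℝ) (hI01 : ∀ j ω, I j ω = 0 ∨ I j ω = 1)
    (Iadm : Ω → ℝ) (hIadm : ∀ ω, Iadm ω = ∏ j, (1 - I j ω))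
    (π : Fin n → ℝ) (hπ : ∀ j, 0 < π j) (πadm : ℝ) (hπadm : 0 ≤ πadm)
    (f : Fin n → ℝ) (fadm : ℝ)
    (hT : ∀ i, f i = π i)
    (R : ℝ) (hR : 0 ≤ R)
    (W : Fin n → Ω → ℝ)
    (hW : ∀ i ω, W i ω =
      (1 + R) * ((∑ j, π j) + πadm) * (f i * I i ω) /
        ((∑ j, f j * I j ω) + fadm * Iadm ω)) :
    ∀ (i : Fin n) (ω : Ω), W i ω ≥ π i * (1 + R) * I i ω := by
  intro i ω
  have hf : f = π := funext hT
  rcases hI01 i ω with hdead | hsurv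
  · simp [hW, hdead]
  have hadm : Iadm ω = 0 := by
    rw [hIadm]
    exact prod_eq_zero (mem_univ i) (by rw [hsurv, sub_self])
  have hshare := le_proportional_share hπ (fun j => hI01 j ω)
    (le_add_of_nonneg_right hπadm : ∑ j, π j ≤ ∑ j, π j + πadm) hsurv
  rw [hW, hf, hsurv, hadm, mul_zero, add_zero, mul_one, mul_one, ge_iff_le, mul_assoc,
    mul_comm (π i), mul_div_assoc]
  exact mul_le_mul_of_nonneg_left hshare (by linarith)

/-- Under the T allocation scheme (`f_i = π_i` for every participant), upon survival each
participant receives at least the accumulated value of his initial investment: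
`W_i(ω) ≥ π_i · (1+R) · I_i(ω)` for all outcomes ω. -/
theorem tontine_T_scheme_payout_ge_investment
    {Ω : Type*} [MeasurableSpace Ω] (P : Measure Ω) [IsProbabilityMeasure P]
    (n : ℕ) (hn : 1 ≤ n)
    (I : Fin n → Ω → ℝ) (hI01 : ∀ j ω, I j ω = 0 ∨ I j ω = 1)
    (hImeas : ∀ j, Measurable (I j))
    (Iadm : Ω → ℝ) (hIadm : ∀ ω, Iadm ω = ∏ j, (1 - I j ω))
    (hadm0 : 0 < P {ω | Iadm ω = 1}) (hadm1 : P {ω | Iadm ω = 1} < 1)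
    (π : Fin n → ℝ) (hπ : ∀ j, 0 < π j) (πadm : ℝ) (hπadm : 0 ≤ πadm)
    (f : Fin n → ℝ) (hf : ∀ j, 0 < f j) (fadm : ℝ) (hfadm : 0 < fadm)
    (hT : ∀ i, f i = π i)
    (R : ℝ) (hR : 0 ≤ R)
    (W : Fin n → Ω → ℝ)
    (hW : ∀ i ω, W i ω =
      (1 + R) * ((∑ j, π j) + πadm) * (f i * I i ω) /
        ((∑ j, f j * I j ω) + fadm * Iadm ω)) :
    ∀ (i : Fin n) (ω : Ω), W i ω ≥ π i * (1 + R) * I i ω :=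
  tontine_T_scheme_payout_ge_investment_general n I hI01 Iadm hIadm π hπ πadm hπadm f fadm hT R hR W
    hW
end

section
/- (Theorem 2) If the tontine fund (I, π, f) is actuarially fair for each of its n participants, then it is also actuarially fair for the administrator; equivalently, the n fairness conditions π_i(1+R) = E[W_i] (i = 1, …, n) imply π_{n+1} = (Σ_{j=1}^{n} π_j) · P[I_{n+1} = 1] / P[I_{n+1} = 0]. -/
open MeasureTheory Finset

/-! The payouts of the participants and of the administrator share out the whole fund
`C = (1 + R) (∑ π + π_adm)` at every outcome, so `E[W_adm] = C - ∑ E[W_i]`, and fairness for the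
participants leaves exactly `(1 + R) π_adm` for the administrator. The administrator is paid `C`
precisely on the event `{I_adm = 1}`, so `E[W_adm] = C p` with `p = P[I_adm = 1]`; solving
`π_adm = (∑ π + π_adm) p` for `π_adm` gives the formula. -/

section ProdOneSub

variable {ι : Type*} [Fintype ι] {x : ι → ℝ}

theorem prod_one_sub_eq_one_iff (hx : ∀ j, x j = 0 ∨ x j = 1) :
    ∏ j, (1 - x j) = 1 ↔ ∀ j, x j = 0 := by
  refine ⟨fun h j => (hx j).resolve_right fun hj => ?_,
    fun h => prod_eq_one fun j _ => by simp [h j]⟩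
  rw [prod_eq_zero (mem_univ j) (by simp [hj])] at h
  exact zero_ne_one h

theorem prod_one_sub_eq_zero_or_one (hx : ∀ j, x j = 0 ∨ x j = 1) :
    ∏ j, (1 - x j) = 0 ∨ ∏ j, (1 - x j) = 1 := by
  by_cases h : ∀ j, x j = 0
  · exact Or.inr ((prod_one_sub_eq_one_iff hx).2 h)
  · obtain ⟨j, hj⟩ := not_forall.1 h
    exact Or.inl (prod_eq_zero (mem_univ j) (by simp [(hx j).resolve_left hj]))

theorem sum_mul_add_mul_prod_one_sub_pos (hx : ∀ j, x j = 0 ∨ x j = 1) {f : ι → ℝ}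
    (hf : ∀ j, 0 < f j) {a : ℝ} (ha : 0 < a) :
    0 < ∑ j, f j * x j + a * ∏ j, (1 - x j) := by
  have hterm : ∀ j ∈ univ, 0 ≤ f j * x j := fun j _ =>
    mul_nonneg (hf j).le (by rcases hx j with h | h <;> simp [h])
  rcases prod_one_sub_eq_zero_or_one hx with h0 | h1
  · obtain ⟨j, hj⟩ : ∃ j, x j ≠ 0 :=
      not_forall.1 fun h => by simp [(prod_one_sub_eq_one_iff hx).2 h] at h0
    have hpos : 0 < ∑ j, f j * x j :=
      sum_pos' hterm ⟨j, mem_univ j, by simpa [(hx j).resolve_left hj] using hf j⟩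
    simpa [h0] using hpos
  · rw [h1, mul_one]
    exact add_pos_of_nonneg_of_pos (sum_nonneg hterm) ha

end ProdOneSub

theorem sum_mul_div_add_mul_div_eq {ι : Type*} (s : Finset ι) (w : ι → ℝ) (b c : ℝ)
    (h : ∑ i ∈ s, w i + b ≠ 0) :
    ∑ i ∈ s, c * w i / (∑ j ∈ s, w j + b) + c * b / (∑ j ∈ s, w j + b) = c := by
  rw [← sum_div, ← mul_sum, ← add_div, ← mul_add, mul_div_assoc, div_self h, mul_one]

theorem eq_mul_div_one_sub_of_eq_add_mul {x s p : ℝ} (hp : p ≠ 1) (h : x = (s + x) * p) :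
    x = s * p / (1 - p) := by
  rw [eq_div_iff (sub_ne_zero.2 hp.symm)]
  linear_combination h

section Probability

variable {Ω : Type*} [MeasurableSpace Ω] {P : Measure Ω}

theorem integrable_mul_div_of_nonneg_of_le [IsFiniteMeasure P] {a b : Ω → ℝ}
    (ha : Measurable a) (hb : Measurable b) (ha0 : ∀ ω, 0 ≤ a ω) (hab : ∀ ω, a ω ≤ b ω) (c : ℝ) :
    Integrable (fun ω => c * a ω / b ω) P := by
  refine Integrable.of_bound ((measurable_const.mul ha).div hb).aestronglyMeasurable |c|
    (ae_of_all _ fun ω => ?_)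
  have hb0 : 0 ≤ b ω := (ha0 ω).trans (hab ω)
  have hle : |a ω / b ω| ≤ 1 := by
    rw [abs_of_nonneg (div_nonneg (ha0 ω) hb0)]
    exact div_le_one_of_le₀ (hab ω) hb0
  rw [Real.norm_eq_abs, mul_div_assoc, abs_mul]
  exact mul_le_of_le_one_right (abs_nonneg c) hle

theorem integral_eq_sub_sum_integral_of_sum_add_eq [IsProbabilityMeasure P] {ι : Type*}
    (s : Finset ι) {W : ι → Ω → ℝ} {V : Ω → ℝ} {c : ℝ} (hW : ∀ i ∈ s, Integrable (W i) P)
    (h : ∀ ω, ∑ i ∈ s, W i ω + V ω = c) :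
    ∫ ω, V ω ∂P = c - ∑ i ∈ s, ∫ ω, W i ω ∂P := by
  calc ∫ ω, V ω ∂P = ∫ ω, (c - ∑ i ∈ s, W i ω) ∂P :=
        integral_congr_ae (ae_of_all _ fun ω => by rw [← h ω]; ring)
    _ = c - ∑ i ∈ s, ∫ ω, W i ω ∂P := by
        rw [integral_sub (integrable_const c) (integrable_finsetSum s hW), integral_const,
          integral_finsetSum s hW]
        simp

theorem probReal_setOf_eq_zero_eq_one_sub [IsProbabilityMeasure P] {g : Ω → ℝ} (hg : Measurable g)
    (h01 : ∀ ω, g ω = 0 ∨ g ω = 1) :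
    P.real {ω | g ω = 0} = 1 - P.real {ω | g ω = 1} := by
  have hcompl : {ω | g ω = 0} = {ω | g ω = 1}ᶜ := by
    ext ω
    rcases h01 ω with h | h <;> simp [h]
  rw [hcompl]
  exact probReal_compl_eq_one_sub (hg (measurableSet_singleton 1))

end Probability

section Tontine

variable {Ω ι : Type*} [Fintype ι] {I : ι → Ω → ℝ}
  (hI01 : ∀ j ω, I j ω = 0 ∨ I j ω = 1) {f : ι → ℝ} {a : ℝ}
include hI01

theorem integrable_participant_payout [MeasurableSpace Ω] {P : Measure Ω} [IsFiniteMeasure P]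
    (hImeas : ∀ j, Measurable (I j)) (hf : ∀ j, 0 ≤ f j) (ha : 0 ≤ a) (c : ℝ) (i : ι) :
    Integrable (fun ω => c * (f i * I i ω) / (∑ j, f j * I j ω + a * ∏ j, (1 - I j ω))) P := by
  have hterm : ∀ j ω, 0 ≤ f j * I j ω := fun j ω =>
    mul_nonneg (hf j) (by rcases hI01 j ω with h | h <;> simp [h])
  have hprod : ∀ ω, 0 ≤ ∏ j, (1 - I j ω) := fun ω => by
    rcases prod_one_sub_eq_zero_or_one (hI01 · ω) with h | h <;> simp [h]
  refine integrable_mul_div_of_nonneg_of_le (by fun_prop) (by fun_prop) (hterm i) (fun ω => ?_) c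
  exact le_add_of_le_of_nonneg (single_le_sum (fun j _ => hterm j ω) (mem_univ i))
    (mul_nonneg ha (hprod ω))

theorem administrator_payout_eq_indicator (ha : a ≠ 0) (c : ℝ) :
    (fun ω => c * (a * ∏ j, (1 - I j ω)) / (∑ j, f j * I j ω + a * ∏ j, (1 - I j ω))) =
      {ω | ∏ j, (1 - I j ω) = 1}.indicator (fun _ => c) := funext fun ω => by
  rcases prod_one_sub_eq_zero_or_one (hI01 · ω) with h | h
  · simp [h]
  · have hI0 : ∀ j, I j ω = 0 := (prod_one_sub_eq_one_iff (hI01 · ω)).1 h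
    simp [hI0, ha]

end Tontine

theorem tontine_fair_participants_implies_fair_administrator_general
    {Ω : Type*} [MeasurableSpace Ω] (P : Measure Ω) [IsProbabilityMeasure P]
    (n : ℕ)
    (I : Fin n → Ω → ℝ) (hI01 : ∀ j ω, I j ω = 0 ∨ I j ω = 1)
    (hImeas : ∀ j, Measurable (I j))
    (Iadm : Ω → ℝ) (hIadm : ∀ ω, Iadm ω = ∏ j, (1 - I j ω))
    (hadm1 : P {ω | Iadm ω = 1} < 1)
    (π : Fin n → ℝ) (πadm : ℝ)
    (f : Fin n → ℝ) (hf : ∀ j, 0 < f j) (fadm : ℝ) (hfadm : 0 < fadm)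
    (R : ℝ) (hR : 0 ≤ R)
    (W : Fin n → Ω → ℝ)
    (hW : ∀ i ω, W i ω =
      (1 + R) * ((∑ j, π j) + πadm) * (f i * I i ω) /
        ((∑ j, f j * I j ω) + fadm * Iadm ω))
    (Wadm : Ω → ℝ)
    (hWadm : ∀ ω, Wadm ω =
      (1 + R) * ((∑ j, π j) + πadm) * (fadm * Iadm ω) /
        ((∑ j, f j * I j ω) + fadm * Iadm ω))
    (hfair : ∀ i, π i * (1 + R) = ∫ ω, W i ω ∂P) :
    πadm * (1 + R) = ∫ ω, Wadm ω ∂P ∧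
    πadm = (∑ j, π j) *
      (P {ω | Iadm ω = 1}).toReal / (P {ω | Iadm ω = 0}).toReal := by
  obtain rfl : Iadm = fun ω => ∏ j, (1 - I j ω) := funext hIadm
  beta_reduce at hW hWadm hadm1 ⊢
  have hW_int : ∀ i, Integrable (W i) P := fun i =>
    (integrable_participant_payout hI01 hImeas (fun j => (hf j).le) hfadm.le _ i).congr
      (ae_of_all _ fun ω => (hW i ω).symm)
  have hbudget : ∀ ω, ∑ i, W i ω + Wadm ω = (1 + R) * ((∑ j, π j) + πadm) := fun ω => by
    simp only [hW, hWadm]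
    exact sum_mul_div_add_mul_div_eq _ _ _ _
      (sum_mul_add_mul_prod_one_sub_pos (hI01 · ω) hf hfadm).ne'
  have hfair_adm : πadm * (1 + R) = ∫ ω, Wadm ω ∂P := by
    rw [integral_eq_sub_sum_integral_of_sum_add_eq univ (fun i _ => hW_int i) hbudget,
      ← sum_congr rfl fun i _ => hfair i, ← sum_mul]
    ring
  refine ⟨hfair_adm, ?_⟩
  have hIadm_meas : Measurable fun ω => ∏ j, (1 - I j ω) := by fun_prop
  rw [funext hWadm, administrator_payout_eq_indicator hI01 hfadm.ne',
    integral_indicator_const _ (measurableSet_eq_fun hIadm_meas measurable_const), smul_eq_mul]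
    at hfair_adm
  rw [← measureReal_def, ← measureReal_def,
    probReal_setOf_eq_zero_eq_one_sub hIadm_meas fun ω => prod_one_sub_eq_zero_or_one (hI01 · ω)]
  refine eq_mul_div_one_sub_of_eq_add_mul (fun h => hadm1.ne ((ENNReal.toReal_eq_one_iff _).1 h)) ?_
  refine mul_right_cancel₀ (b := 1 + R) (by positivity) ?_
  linear_combination hfair_adm

/-- Theorem 2: if the tontine fund is actuarially fair for each of its `n` participants,
then it is also actuarially fair for the administrator, i.e.
`π_{n+1}·(1+R) = E[W_{n+1}]`, and `π_{n+1} = (Σ_{j=1}^n π_j) · P[I_{n+1}=1]/P[I_{n+1}=0]`. -/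
theorem tontine_fair_participants_implies_fair_administrator
    {Ω : Type*} [MeasurableSpace Ω] (P : Measure Ω) [IsProbabilityMeasure P]
    (n : ℕ) (hn : 1 ≤ n)
    (I : Fin n → Ω → ℝ) (hI01 : ∀ j ω, I j ω = 0 ∨ I j ω = 1)
    (hImeas : ∀ j, Measurable (I j))
    (Iadm : Ω → ℝ) (hIadm : ∀ ω, Iadm ω = ∏ j, (1 - I j ω))
    (hadm0 : 0 < P {ω | Iadm ω = 1}) (hadm1 : P {ω | Iadm ω = 1} < 1)
    (π : Fin n → ℝ) (hπ : ∀ j, 0 < π j) (πadm : ℝ) (hπadm : 0 ≤ πadm)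
    (f : Fin n → ℝ) (hf : ∀ j, 0 < f j) (fadm : ℝ) (hfadm : 0 < fadm)
    (R : ℝ) (hR : 0 ≤ R)
    (W : Fin n → Ω → ℝ)
    (hW : ∀ i ω, W i ω =
      (1 + R) * ((∑ j, π j) + πadm) * (f i * I i ω) /
        ((∑ j, f j * I j ω) + fadm * Iadm ω))
    (Wadm : Ω → ℝ)
    (hWadm : ∀ ω, Wadm ω =
      (1 + R) * ((∑ j, π j) + πadm) * (fadm * Iadm ω) /
        ((∑ j, f j * I j ω) + fadm * Iadm ω))
    (hfair : ∀ i, π i * (1 + R) = ∫ ω, W i ω ∂P) :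
    πadm * (1 + R) = ∫ ω, Wadm ω ∂P ∧
    πadm = (∑ j, π j) *
      (P {ω | Iadm ω = 1}).toReal / (P {ω | Iadm ω = 0}).toReal :=
  tontine_fair_participants_implies_fair_administrator_general P n I hI01 hImeas Iadm hIadm hadm1 π
    πadm f hf fadm hfadm R hR W hW Wadm hWadm hfair
end

section
/- The tontine fund is actuarially fair for the administrator, i.e. π_{n+1}(1+R) = E[W_{n+1}], if and only if π_{n+1} = (Σ_{j=1}^{n} π_j) · P[I_{n+1} = 1] / P[I_{n+1} = 0]. -/
open MeasureTheory Finset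

/-!
If nobody but the administrator survives, the whole fund `(1 + R) (Σ π_j + π_{n+1})` goes to
the administrator, and otherwise the administrator gets nothing: with `p = P[I_{n+1} = 1]`,
`E[W_{n+1}] = (1 + R) (Σ π_j + π_{n+1}) p`. Fairness then reads
`π_{n+1} = (Σ π_j + π_{n+1}) p`, a linear equation in `π_{n+1}` whose solution is
`Σ π_j · p / (1 - p)`, and `1 - p = P[I_{n+1} = 0]`.
-/

open Classical in
theorem Finset.prod_one_sub_eq_ite {ι R : Type*} [CommRing R] {s : Finset ι} {x : ι → R}
    (hx : ∀ j ∈ s, x j = 0 ∨ x j = 1) :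
    ∏ j ∈ s, (1 - x j) = if ∀ j ∈ s, x j = 0 then 1 else 0 := by
  split_ifs with h
  · exact prod_eq_one fun j hj => by rw [h j hj, sub_zero]
  · push Not at h
    obtain ⟨j, hj, hxj⟩ := h
    exact prod_eq_zero hj (by rw [(hx j hj).resolve_left hxj, sub_self])

open Classical in
theorem mul_div_sum_mul_add_mul_prod_one_sub_eq_ite {ι K : Type*} [Fintype ι] [Field K]
    {x : ι → K} (hx : ∀ j, x j = 0 ∨ x j = 1) (f : ι → K) (c : K) {a : K} (ha : a ≠ 0) :
    c * (a * ∏ j, (1 - x j)) / (∑ j, f j * x j + a * ∏ j, (1 - x j)) =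
      if ∀ j, x j = 0 then c else 0 := by
  rw [prod_one_sub_eq_ite fun j _ => hx j]
  simp only [mem_univ, forall_const]
  split_ifs with h
  · simp [h, ha]
  · simp

theorem mul_eq_mul_mul_add_iff_eq_mul_div_one_sub {K : Type*} [Field K] {x s k p : K}
    (hk : k ≠ 0) (hp : p ≠ 1) : x * k = k * (s + x) * p ↔ x = s * p / (1 - p) := by
  rw [eq_div_iff (sub_ne_zero.2 hp.symm), mul_comm x k, mul_assoc, mul_right_inj' hk]
  constructor <;> intro h <;> linear_combination h

theorem tontine_administrator_fairness_iff_general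
    {Ω : Type*} [MeasurableSpace Ω] (P : Measure Ω) [IsProbabilityMeasure P]
    (n : ℕ)
    (I : Fin n → Ω → ℝ) (hI01 : ∀ j ω, I j ω = 0 ∨ I j ω = 1)
    (hImeas : ∀ j, Measurable (I j))
    (Iadm : Ω → ℝ) (hIadm : ∀ ω, Iadm ω = ∏ j, (1 - I j ω))
    (hadm1 : P {ω | Iadm ω = 1} < 1)
    (π : Fin n → ℝ) (πadm : ℝ)
    (f : Fin n → ℝ) (fadm : ℝ) (hfadm : 0 < fadm)
    (R : ℝ) (hR : 0 ≤ R)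
    (Wadm : Ω → ℝ)
    (hWadm : ∀ ω, Wadm ω =
      (1 + R) * ((∑ j, π j) + πadm) * (fadm * Iadm ω) /
        ((∑ j, f j * I j ω) + fadm * Iadm ω)) :
    πadm * (1 + R) = ∫ ω, Wadm ω ∂P ↔
    πadm = (∑ j, π j) *
      (P {ω | Iadm ω = 1}).toReal / (P {ω | Iadm ω = 0}).toReal := by
  set A := {ω | ∀ j, I j ω = 0}
  have hA : MeasurableSet A := by measurability
  have hIadm_one : {ω | Iadm ω = 1} = A := by
    ext ω; simp [hIadm, prod_one_sub_eq_ite fun j _ => hI01 j ω, A]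
  have hIadm_zero : {ω | Iadm ω = 0} = Aᶜ := by
    ext ω; simp [hIadm, prod_one_sub_eq_ite fun j _ => hI01 j ω, A]
  have hW : Wadm = A.indicator fun _ => (1 + R) * ((∑ j, π j) + πadm) := by
    ext ω
    rw [hWadm, hIadm, mul_div_sum_mul_add_mul_prod_one_sub_eq_ite (hI01 · ω) _ _ hfadm.ne',
      Set.indicator_apply]
    congr
  have hp : P.real A ≠ 1 := by
    rw [← hIadm_one, measureReal_def, ENNReal.toReal_ne_one]; exact hadm1.ne
  rw [hW, integral_indicator_const _ hA, hIadm_one, hIadm_zero, ← measureReal_def,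
    ← measureReal_def, probReal_compl_eq_one_sub hA, smul_eq_mul, mul_comm (P.real A)]
  exact mul_eq_mul_mul_add_iff_eq_mul_div_one_sub (by positivity) hp

/-- The tontine fund is actuarially fair for the administrator,
`π_{n+1}·(1+R) = E[W_{n+1}]`, if and only if
`π_{n+1} = (Σ_{j=1}^n π_j) · P[I_{n+1}=1]/P[I_{n+1}=0]`. -/
theorem tontine_administrator_fairness_iff
    {Ω : Type*} [MeasurableSpace Ω] (P : Measure Ω) [IsProbabilityMeasure P]
    (n : ℕ) (hn : 1 ≤ n)
    (I : Fin n → Ω → ℝ) (hI01 : ∀ j ω, I j ω = 0 ∨ I j ω = 1)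
    (hImeas : ∀ j, Measurable (I j))
    (Iadm : Ω → ℝ) (hIadm : ∀ ω, Iadm ω = ∏ j, (1 - I j ω))
    (hadm0 : 0 < P {ω | Iadm ω = 1}) (hadm1 : P {ω | Iadm ω = 1} < 1)
    (π : Fin n → ℝ) (hπ : ∀ j, 0 < π j) (πadm : ℝ) (hπadm : 0 ≤ πadm)
    (f : Fin n → ℝ) (hf : ∀ j, 0 < f j) (fadm : ℝ) (hfadm : 0 < fadm)
    (R : ℝ) (hR : 0 ≤ R)
    (Wadm : Ω → ℝ)
    (hWadm : ∀ ω, Wadm ω =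
      (1 + R) * ((∑ j, π j) + πadm) * (fadm * Iadm ω) /
        ((∑ j, f j * I j ω) + fadm * Iadm ω)) :
    πadm * (1 + R) = ∫ ω, Wadm ω ∂P ↔
    πadm = (∑ j, π j) *
      (P {ω | Iadm ω = 1}).toReal / (P {ω | Iadm ω = 0}).toReal :=
  tontine_administrator_fairness_iff_general P n I hI01 hImeas Iadm hIadm hadm1 π πadm f fadm hfadm
    R hR Wadm hWadm
end

section
/- The expected value of the total payout to the n participants equals E[Σ_{j=1}^{n} W_j] = (1+R) · (Σ_{j=1}^{n+1} π_j) · P[I_{n+1} = 0]. -/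
/-!
Pointwise, the participants' payouts add up to the whole pot when someone survives (the
administrator's term in the denominator then vanishes and the shares `f i * I i / ∑ j, f j * I j`
sum to one) and to zero otherwise. So the total payout is the pot times the indicator of
`{I_{n+1} = 0}`, whose expectation is the claimed value.
-/

open MeasureTheory Finset

lemma sum_tontine_payout_eq_ite {ι : Type*} [Fintype ι] (c a : ℝ) (f x : ι → ℝ)
    (hf : ∀ j, 0 < f j) (hx : ∀ j, x j = 0 ∨ x j = 1) :
    ∑ i, c * (f i * x i) / (∑ j, f j * x j + a * ∏ j, (1 - x j)) =
      if ∏ j, (1 - x j) = 0 then c else 0 := by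
  split_ifs with hprod
  · obtain ⟨j₀, -, hj₀⟩ := prod_eq_zero_iff.mp hprod
    have hpos : 0 < ∑ j, f j * x j := by
      refine sum_pos' (fun j _ => ?_) ⟨j₀, mem_univ _, ?_⟩
      · rcases hx j with h | h <;> simp [h, (hf j).le]
      · rw [show x j₀ = 1 by linarith, mul_one]
        exact hf j₀
    rw [hprod, mul_zero, add_zero, ← sum_div, ← mul_sum, mul_div_assoc, div_self hpos.ne',
      mul_one]
  · have hzero : ∀ j, x j = 0 := fun j =>
      (hx j).resolve_right fun h => hprod (prod_eq_zero (mem_univ j) (by rw [h, sub_self]))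
    simp [hzero]

theorem tontine_expected_total_participant_payout_general
    {Ω : Type*} [MeasurableSpace Ω] (P : Measure Ω) [IsProbabilityMeasure P]
    (n : ℕ)
    (I : Fin n → Ω → ℝ) (hI01 : ∀ j ω, I j ω = 0 ∨ I j ω = 1)
    (hImeas : ∀ j, Measurable (I j))
    (Iadm : Ω → ℝ) (hIadm : ∀ ω, Iadm ω = ∏ j, (1 - I j ω))
    (π : Fin n → ℝ) (πadm : ℝ)
    (f : Fin n → ℝ) (hf : ∀ j, 0 < f j) (fadm : ℝ)
    (R : ℝ)
    (W : Fin n → Ω → ℝ)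
    (hW : ∀ i ω, W i ω =
      (1 + R) * ((∑ j, π j) + πadm) * (f i * I i ω) /
        ((∑ j, f j * I j ω) + fadm * Iadm ω)) :
    ∫ ω, (∑ j, W j ω) ∂P =
      (1 + R) * ((∑ j, π j) + πadm) * (P {ω | Iadm ω = 0}).toReal := by
  have hIadm_meas : Measurable Iadm := by
    simp only [funext hIadm]
    exact measurable_prod _ fun j _ => measurable_const.sub (hImeas j)
  have hpayout : ∀ ω, ∑ j, W j ω =
      {ω | Iadm ω = 0}.indicator (fun _ => (1 + R) * ((∑ j, π j) + πadm)) ω := by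
    intro ω
    simp only [Set.indicator_apply, hW, hIadm]
    exact sum_tontine_payout_eq_ite _ _ f (fun j => I j ω) hf fun j => hI01 j ω
  have hsurvivor : MeasurableSet {ω | Iadm ω = 0} := hIadm_meas (measurableSet_singleton 0)
  simp_rw [hpayout]
  rw [integral_indicator_const _ hsurvivor, smul_eq_mul, mul_comm,
    measureReal_def]

/-- The expected value of the total payout to the `n` participants equals
`(1+R) · (Σ_{j=1}^{n+1} π_j) · P[I_{n+1}=0]`. -/
theorem tontine_expected_total_participant_payout
    {Ω : Type*} [MeasurableSpace Ω] (P : Measure Ω) [IsProbabilityMeasure P]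
    (n : ℕ) (hn : 1 ≤ n)
    (I : Fin n → Ω → ℝ) (hI01 : ∀ j ω, I j ω = 0 ∨ I j ω = 1)
    (hImeas : ∀ j, Measurable (I j))
    (Iadm : Ω → ℝ) (hIadm : ∀ ω, Iadm ω = ∏ j, (1 - I j ω))
    (hadm0 : 0 < P {ω | Iadm ω = 1}) (hadm1 : P {ω | Iadm ω = 1} < 1)
    (π : Fin n → ℝ) (hπ : ∀ j, 0 < π j) (πadm : ℝ) (hπadm : 0 ≤ πadm)
    (f : Fin n → ℝ) (hf : ∀ j, 0 < f j) (fadm : ℝ) (hfadm : 0 < fadm)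
    (R : ℝ) (hR : 0 ≤ R)
    (W : Fin n → Ω → ℝ)
    (hW : ∀ i ω, W i ω =
      (1 + R) * ((∑ j, π j) + πadm) * (f i * I i ω) /
        ((∑ j, f j * I j ω) + fadm * Iadm ω)) :
    ∫ ω, (∑ j, W j ω) ∂P =
      (1 + R) * ((∑ j, π j) + πadm) * (P {ω | Iadm ω = 0}).toReal :=
  tontine_expected_total_participant_payout_general P n I hI01 hImeas Iadm hIadm π πadm f hf fadm R
    W hW
end

section
/- (Theorem 5) Suppose the survival indicator vector (I_1, …, I_n) is exchangeable, the share allocation is uniform (f_1 = ⋯ = f_n = f > 0), and π_{n+1} > 0. Then the tontine fund is actuarially fair for each of its n participants if and only if all participants pay the same initial investment π_1 = ⋯ = π_n = π with π = (π_{n+1}/n) · P[I_{n+1} = 0] / P[I_{n+1} = 1]. -/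
open MeasureTheory Finset

/-!
With uniform shares the payout of participant `i` is `(1 + R) T · I_i / S`, where `T` is the
total investment and `S = ∑ I_j`: the administrator's term in the denominator is nonzero only
when `S = 0`, and then the payout of `i` vanishes anyway. Exchangeability makes `E[I_i / S]`
independent of `i`, and these `n` expectations add up to `P[S ≠ 0] = P[I_{n+1} = 0]`. Fairness
thus says that every `π_i` equals `T · P[I_{n+1} = 0] / n`, a linear equation for `T` with
solution `π_{n+1} / P[I_{n+1} = 1]`.
-/

section

variable {ι Ω : Type*}

def Exchangeable {β : Type*} [MeasurableSpace Ω] [MeasurableSpace β]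
    (X : ι → Ω → β) (P : Measure Ω) : Prop :=
  ∀ σ : Equiv.Perm ι, P.map (fun ω j => X (σ j) ω) = P.map (fun ω j => X j ω)

lemma Exchangeable.integral_comp_perm {β : Type*} [MeasurableSpace Ω] [MeasurableSpace β]
    {P : Measure Ω} {X : ι → Ω → β} (hX : Exchangeable X P) (hXm : ∀ j, Measurable (X j))
    {g : (ι → β) → ℝ} (hg : Measurable g) (σ : Equiv.Perm ι) :
    ∫ ω, g (fun j => X (σ j) ω) ∂P = ∫ ω, g (fun j => X j ω) ∂P := by
  have hXσm : Measurable fun ω j => X (σ j) ω := measurable_pi_lambda _ fun j => hXm (σ j)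
  rw [← integral_map hXσm.aemeasurable hg.aestronglyMeasurable, hX σ,
    integral_map (measurable_pi_lambda _ hXm).aemeasurable hg.aestronglyMeasurable]

variable [Fintype ι]

lemma prod_one_sub_eq_ite_sum_eq_zero {x : ι → ℝ} (hx : ∀ j, x j = 0 ∨ x j = 1) :
    ∏ j, (1 - x j) = if ∑ j, x j = 0 then 1 else 0 := by
  have hx0 : ∀ j ∈ univ, 0 ≤ x j := fun j _ => by rcases hx j with h | h <;> simp [h]
  split_ifs with hsum
  · rw [sum_eq_zero_iff_of_nonneg hx0] at hsum
    exact prod_eq_one fun j hj => by simp [hsum j hj]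
  · obtain ⟨j, -, hj⟩ := exists_ne_zero_of_sum_ne_zero hsum
    exact prod_eq_zero (mem_univ j) (by simp [(hx j).resolve_left hj])

lemma mul_div_sum_mul_add_mul_prod_one_sub {x : ι → ℝ} (hx : ∀ j, x j = 0 ∨ x j = 1)
    {c : ℝ} (hc : c ≠ 0) (a : ℝ) (i : ι) :
    c * x i / (∑ j, c * x j + a * ∏ j, (1 - x j)) = x i / ∑ j, x j := by
  rw [prod_one_sub_eq_ite_sum_eq_zero hx, ← mul_sum]
  split_ifs with hsum
  · have hxi : x i = 0 := (sum_eq_zero_iff_of_nonneg fun j _ => by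
      rcases hx j with h | h <;> simp [h]).mp hsum i (mem_univ i)
    simp [hxi, hsum]
  · rw [mul_zero, add_zero, mul_div_mul_left _ _ hc]

lemma norm_div_sum_le_one {x : ι → ℝ} (hx : ∀ j, 0 ≤ x j) (i : ι) :
    ‖x i / ∑ j, x j‖ ≤ 1 := by
  have hsum : 0 ≤ ∑ j, x j := sum_nonneg fun j _ => hx j
  rw [Real.norm_eq_abs, abs_of_nonneg (div_nonneg (hx i) hsum)]
  exact div_le_one_of_le₀ (single_le_sum (fun j _ => hx j) (mem_univ i)) hsum

lemma sum_div_sum_eq_indicator (x : ι → ℝ) :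
    ∑ i, x i / ∑ j, x j = {y : ι → ℝ | ∑ j, y j ≠ 0}.indicator 1 x := by
  rw [← sum_div]
  by_cases h : ∑ j, x j = 0 <;> simp [h]

namespace Exchangeable

variable [MeasurableSpace Ω] {P : Measure Ω} {X : ι → Ω → ℝ}

lemma integral_div_sum_eq [DecidableEq ι] (hX : Exchangeable X P)
    (hXm : ∀ j, Measurable (X j)) (i k : ι) :
    ∫ ω, X i ω / ∑ j, X j ω ∂P = ∫ ω, X k ω / ∑ j, X j ω ∂P := by
  have hg : Measurable fun v : ι → ℝ => v k / ∑ j, v j :=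
    (measurable_pi_apply k).div (Finset.measurable_sum _ fun j _ => measurable_pi_apply j)
  convert hX.integral_comp_perm hXm hg (Equiv.swap i k) using 3 with ω
  simp [Equiv.sum_comp (Equiv.swap i k) (fun j => X j ω)]

lemma integral_div_sum_eq_measureReal_div_card [IsFiniteMeasure P] (hX : Exchangeable X P)
    (hXm : ∀ j, Measurable (X j)) (hX0 : ∀ j ω, 0 ≤ X j ω) (i : ι) :
    ∫ ω, X i ω / ∑ j, X j ω ∂P = P.real {ω | ∑ j, X j ω ≠ 0} / Fintype.card ι := by
  classical
  have : Nonempty ι := ⟨i⟩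
  have hS : Measurable fun ω => ∑ j, X j ω := Finset.measurable_sum _ fun j _ => hXm j
  have hS0 : MeasurableSet {ω | ∑ j, X j ω ≠ 0} := (hS (measurableSet_singleton 0)).compl
  have hint : ∀ k, Integrable (fun ω => X k ω / ∑ j, X j ω) P := fun k =>
    .of_bound ((hXm k).div hS).aestronglyMeasurable 1
      (ae_of_all _ fun ω => norm_div_sum_le_one (hX0 · ω) k)
  have htotal : ∑ k, ∫ ω, X k ω / ∑ j, X j ω ∂P = P.real {ω | ∑ j, X j ω ≠ 0} := by
    rw [← integral_finsetSum _ fun k _ => hint k, ← integral_indicator_one hS0]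
    exact integral_congr_ae (ae_of_all _ fun ω => sum_div_sum_eq_indicator (X · ω))
  have hcard : (Fintype.card ι : ℝ) ≠ 0 := Nat.cast_ne_zero.mpr Fintype.card_ne_zero
  rw [← htotal, sum_congr rfl fun k _ => hX.integral_div_sum_eq hXm k i, sum_const,
    card_univ, nsmul_eq_mul, mul_div_cancel_left₀ _ hcard]

end Exchangeable

lemma forall_eq_sum_add_mul_div_card_iff (π : ι → ℝ) {a p q : ℝ} (hpq : p + q = 1)
    (hq : q ≠ 0) :
    (∀ i, π i = (∑ j, π j + a) * (p / Fintype.card ι)) ↔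
      ∀ i, π i = a / Fintype.card ι * (p / q) := by
  rcases isEmpty_or_nonempty ι with hι | hι
  · simp
  have hcard : (Fintype.card ι : ℝ) ≠ 0 := Nat.cast_ne_zero.mpr Fintype.card_ne_zero
  constructor
  · intro h i
    set T := ∑ j, π j + a with hT
    have hsum : ∑ j, π j = T * p := by
      rw [sum_congr rfl fun j _ => h j, sum_const, card_univ, nsmul_eq_mul]
      field_simp
    have htotal : T = a / q := by
      rw [eq_div_iff hq]
      linear_combination hT + hsum + T * hpq
    rw [h i, htotal]
    ring
  · intro h i
    have htotal : ∑ j, π j + a = a / q := by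
      rw [sum_congr rfl fun j _ => h j, sum_const, card_univ, nsmul_eq_mul]
      field_simp
      linear_combination a * hpq
    rw [h i, htotal]
    ring

end

theorem tontine_exchangeable_uniform_shares_fairness_general
    {Ω : Type*} [MeasurableSpace Ω] (P : Measure Ω) [IsProbabilityMeasure P]
    (n : ℕ)
    (I : Fin n → Ω → ℝ) (hI01 : ∀ j ω, I j ω = 0 ∨ I j ω = 1)
    (hImeas : ∀ j, Measurable (I j))
    (hexch : ∀ σ : Equiv.Perm (Fin n),
      Measure.map (fun ω => fun j => I (σ j) ω) P =
        Measure.map (fun ω => fun j => I j ω) P)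
    (Iadm : Ω → ℝ) (hIadm : ∀ ω, Iadm ω = ∏ j, (1 - I j ω))
    (hadm0 : 0 < P {ω | Iadm ω = 1})
    (π : Fin n → ℝ) (πadm : ℝ)
    (f : Fin n → ℝ) (fadm : ℝ)
    (fconst : ℝ) (hfconst : 0 < fconst) (hfuni : ∀ j, f j = fconst)
    (R : ℝ) (hR : 0 ≤ R)
    (W : Fin n → Ω → ℝ)
    (hW : ∀ i ω, W i ω =
      (1 + R) * ((∑ j, π j) + πadm) * (f i * I i ω) /
        ((∑ j, f j * I j ω) + fadm * Iadm ω)) :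
    (∀ i, π i * (1 + R) = ∫ ω, W i ω ∂P) ↔
    (∀ i, π i = (πadm / n) *
      ((P {ω | Iadm ω = 0}).toReal / (P {ω | Iadm ω = 1}).toReal)) := by
  have hIadm_ite : ∀ ω, Iadm ω = if ∑ j, I j ω = 0 then 1 else 0 := fun ω =>
    (hIadm ω).trans (prod_one_sub_eq_ite_sum_eq_zero (hI01 · ω))
  have hdead : {ω | Iadm ω = 1} = {ω | ∑ j, I j ω = 0} := by
    ext ω; by_cases h : ∑ j, I j ω = 0 <;> simp [hIadm_ite, h]
  have halive : {ω | Iadm ω = 0} = {ω | ∑ j, I j ω ≠ 0} := by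
    ext ω; by_cases h : ∑ j, I j ω = 0 <;> simp [hIadm_ite, h]
  have hdead_meas : MeasurableSet {ω | ∑ j, I j ω = 0} :=
    (Finset.measurable_sum _ fun j _ => hImeas j) (measurableSet_singleton 0)
  have hpq : P.real {ω | ∑ j, I j ω ≠ 0} + P.real {ω | ∑ j, I j ω = 0} = 1 := by
    rw [← Set.compl_ofPred, probReal_compl_eq_one_sub hdead_meas, sub_add_cancel]
  have hq : P.real {ω | ∑ j, I j ω = 0} ≠ 0 := by
    rw [← hdead]; exact (ENNReal.toReal_pos hadm0.ne' (measure_ne_top _ _)).ne'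
  have hpayout : ∀ i ω, W i ω = (1 + R) * (∑ j, π j + πadm) * (I i ω / ∑ j, I j ω) := by
    intro i ω
    rw [hW, hfuni, hIadm, mul_div_assoc, funext hfuni,
      mul_div_sum_mul_add_mul_prod_one_sub (hI01 · ω) hfconst.ne']
  have hEW : ∀ i, ∫ ω, W i ω ∂P =
      (1 + R) * ((∑ j, π j + πadm) * (P.real {ω | ∑ j, I j ω ≠ 0} / n)) := by
    intro i
    simp_rw [hpayout, integral_const_mul, Exchangeable.integral_div_sum_eq_measureReal_div_card
      hexch hImeas (fun j ω => by rcases hI01 j ω with h | h <;> simp [h]) i, Fintype.card_fin,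
      mul_assoc]
  have hcancel : (1 + R) ≠ 0 := by positivity
  simp_rw [hEW, mul_comm _ (1 + R), mul_right_inj' hcancel, halive, hdead, ← measureReal_def]
  simpa using forall_eq_sum_add_mul_div_card_iff π (a := πadm) hpq hq

/-- Theorem 5: if the survival indicator vector is exchangeable and the share allocation is
uniform, then the tontine fund is actuarially fair for each of its `n` participants if and
only if all participants pay the same initial investment
`π = (π_{n+1}/n) · P[I_{n+1}=0]/P[I_{n+1}=1]`. -/
theorem tontine_exchangeable_uniform_shares_fairness
    {Ω : Type*} [MeasurableSpace Ω] (P : Measure Ω) [IsProbabilityMeasure P]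
    (n : ℕ) (hn : 1 ≤ n)
    (I : Fin n → Ω → ℝ) (hI01 : ∀ j ω, I j ω = 0 ∨ I j ω = 1)
    (hImeas : ∀ j, Measurable (I j))
    (hexch : ∀ σ : Equiv.Perm (Fin n),
      Measure.map (fun ω => fun j => I (σ j) ω) P =
        Measure.map (fun ω => fun j => I j ω) P)
    (Iadm : Ω → ℝ) (hIadm : ∀ ω, Iadm ω = ∏ j, (1 - I j ω))
    (hadm0 : 0 < P {ω | Iadm ω = 1}) (hadm1 : P {ω | Iadm ω = 1} < 1)
    (π : Fin n → ℝ) (hπ : ∀ j, 0 < π j) (πadm : ℝ) (hπadm : 0 < πadm)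
    (f : Fin n → ℝ) (hf : ∀ j, 0 < f j) (fadm : ℝ) (hfadm : 0 < fadm)
    (fconst : ℝ) (hfconst : 0 < fconst) (hfuni : ∀ j, f j = fconst)
    (R : ℝ) (hR : 0 ≤ R)
    (W : Fin n → Ω → ℝ)
    (hW : ∀ i ω, W i ω =
      (1 + R) * ((∑ j, π j) + πadm) * (f i * I i ω) /
        ((∑ j, f j * I j ω) + fadm * Iadm ω)) :
    (∀ i, π i * (1 + R) = ∫ ω, W i ω ∂P) ↔
    (∀ i, π i = (πadm / n) *
      ((P {ω | Iadm ω = 0}).toReal / (P {ω | Iadm ω = 1}).toReal)) :=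
  tontine_exchangeable_uniform_shares_fairness_general P n I hI01 hImeas hexch Iadm hIadm hadm0 π
    πadm f fadm fconst hfconst hfuni R hR W hW
end
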